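/- arXiv:2503.09565 — 2 statements merged into one kernel-verified Lean document; each statement's English description precedes it below -/
import Mathlib

section
/- Let SiLU(x) = x·σ(x), where σ(x) = 1/(1 + exp(−x)) is the sigmoid function. Then for all real numbers r_1, r_2, the function x ↦ (r_1 + SiLU(x))·(r_2 + SiLU'(x)), where SiLU'(x) = σ(x) + x·σ(x)(1 − σ(x)) is the derivative of SiLU, is not constant Lebesgue-almost everywhere on ℝ; that is, there is no C ∈ ℝ with (r_1 + x σ(x))·(r_2 + σ(x) + x σ(x)(1 − σ(x))) = C for Lebesgue-almost every x. -/
open MeasureTheory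

/-- The sigmoid function. -/
noncomputable def sigmoid (x : ℝ) : ℝ := 1 / (1 + Real.exp (-x))

/-!
Write `F(x) = (r₁ + x σ(x)) (r₂ + σ(x) + x σ(x) (1 - σ(x)))`. Since `σ(-x) = 1 - σ(x)`, the
constant `r₁` cancels from the even combination `F(x) + F(-x) - 2 F(0)`, which equals
`x eˣ / (eˣ + 1)² · (2 (r₂ + 1) sinh x + x)`. As `F` is continuous, a.e. constancy means
constancy, so `2 (r₂ + 1) sinh x + x` would vanish for all `x ≠ 0`; at `x = 1, 2` this together
with `sinh 2 = 2 sinh 1 cosh 1` forces `cosh 1 = 1`.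
-/

lemma sigmoid_eq_real_sigmoid : sigmoid = Real.sigmoid := by
  ext x
  rw [sigmoid, Real.sigmoid_def, one_div]

namespace Real

lemma sigmoid_eq_exp_div (x : ℝ) : sigmoid x = exp x / (exp x + 1) := by
  have := exp_pos x
  rw [sigmoid_def, exp_neg]
  field_simp

noncomputable def siluProduct (r₁ r₂ x : ℝ) : ℝ :=
  (r₁ + x * sigmoid x) * (r₂ + sigmoid x + x * sigmoid x * (1 - sigmoid x))

lemma continuous_siluProduct (r₁ r₂ : ℝ) : Continuous (siluProduct r₁ r₂) := by
  have := continuous_sigmoid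
  unfold siluProduct
  fun_prop

lemma siluProduct_add_neg_sub_two_mul_zero (r₁ r₂ x : ℝ) :
    siluProduct r₁ r₂ x + siluProduct r₁ r₂ (-x) - 2 * siluProduct r₁ r₂ 0 =
      x * exp x / (exp x + 1) ^ 2 * (2 * (r₂ + 1) * sinh x + x) := by
  have hsym : siluProduct r₁ r₂ x + siluProduct r₁ r₂ (-x) - 2 * siluProduct r₁ r₂ 0 =
      x * ((2 * sigmoid x - 1) * (r₂ + 1) + x * sigmoid x * (1 - sigmoid x)) := by
    simp only [siluProduct, sigmoid_neg, sigmoid_zero]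
    ring
  have := exp_pos x
  rw [hsym, sigmoid_eq_exp_div, sinh_eq, exp_neg]
  field_simp
  ring

lemma exists_mul_sinh_add_self_ne_zero (a : ℝ) : ∃ x ≠ 0, a * sinh x + x ≠ 0 := by
  by_contra! h
  have h1 := h 1 one_ne_zero
  have h2 := h 2 two_ne_zero
  have hcosh : 1 < cosh 1 := one_lt_cosh.2 one_ne_zero
  rw [show (2 : ℝ) = 2 * 1 by norm_num, sinh_two_mul] at h2
  nlinarith

end Real

/-- For all reals `r₁ r₂`, the function
`x ↦ (r₁ + x * σ x) * (r₂ + σ x + x * σ x * (1 - σ x))` (i.e. `(r₁ + SiLU x)(r₂ + SiLU' x)`)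
is not constant Lebesgue-almost everywhere. -/
theorem stmt_9 (r₁ r₂ : ℝ) :
    ¬ ∃ C : ℝ, ∀ᵐ x : ℝ ∂(volume : Measure ℝ),
      (r₁ + x * sigmoid x) * (r₂ + sigmoid x + x * sigmoid x * (1 - sigmoid x)) = C := by
  rintro ⟨C, hC⟩
  simp only [sigmoid_eq_real_sigmoid] at hC
  have hconst : Real.siluProduct r₁ r₂ = fun _ ↦ C :=
    ((Real.continuous_siluProduct r₁ r₂).ae_eq_iff_eq volume continuous_const).1 hC
  obtain ⟨x, hx, hsinh⟩ := Real.exists_mul_sinh_add_self_ne_zero (2 * (r₂ + 1))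
  have hzero := Real.siluProduct_add_neg_sub_two_mul_zero r₁ r₂ x
  simp only [hconst] at hzero
  have hfactor : x * Real.exp x / (Real.exp x + 1) ^ 2 ≠ 0 := by positivity
  exact mul_ne_zero hfactor hsinh (by linarith)
end

section
/- Let Φ(x) denote the cumulative distribution function of the standard Gaussian distribution N(0,1), and let GeLU(x) = x·Φ(x). Then for all real numbers r_1, r_2, the function x ↦ (r_1 + GeLU(x))·(r_2 + GeLU'(x)), where GeLU'(x) = Φ(x) + x·(2π)^{−1/2} e^{−x²/2} is the derivative of GeLU, is not constant Lebesgue-almost everywhere on ℝ. -/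
/-!
The product `F = (r₁ + GeLU) (r₂ + GeLU')` is continuous, so if it is constant almost everywhere
it is constant, and `F' = GeLU' (r₂ + GeLU') + (r₁ + GeLU) GeLU''` vanishes identically.
Since `GeLU'' x = (2 - x²) φ x` with `φ = stdGaussPDF`, at `x = ±√2` this leaves
`GeLU' x (r₂ + GeLU' x) = 0`.
But `GeLU' √2 > 0 > GeLU' (-√2)`, the latter by the Mills-ratio bound `Φ x ≤ φ x / (-x)` for
`x < 0`, so `r₂` would have to equal both `-GeLU' √2` and `-GeLU' (-√2)`.
-/

open MeasureTheory

/-- The cumulative distribution function of the standard Gaussian distribution,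
`Φ x = ∫_{-∞}^x (2π)^{-1/2} exp (-t²/2) dt`. -/
noncomputable def stdGaussCDF (x : ℝ) : ℝ :=
  ∫ t in Set.Iic x, (Real.sqrt (2 * Real.pi))⁻¹ * Real.exp (-t ^ 2 / 2)

/-- The GeLU function `GeLU x = x * Φ x`. -/
noncomputable def gelu (x : ℝ) : ℝ := x * stdGaussCDF x

/-- The derivative of GeLU: `GeLU' x = Φ x + x * (2π)^{-1/2} exp (-x²/2)`. -/
noncomputable def gelu' (x : ℝ) : ℝ :=
  stdGaussCDF x + x * ((Real.sqrt (2 * Real.pi))⁻¹ * Real.exp (-x ^ 2 / 2))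

open Filter Set

noncomputable def stdGaussPDF (x : ℝ) : ℝ :=
  (Real.sqrt (2 * Real.pi))⁻¹ * Real.exp (-x ^ 2 / 2)

lemma stdGaussPDF_pos (x : ℝ) : 0 < stdGaussPDF x := by
  unfold stdGaussPDF
  positivity

lemma continuous_stdGaussPDF : Continuous stdGaussPDF := by
  unfold stdGaussPDF
  fun_prop

lemma integrable_stdGaussPDF : Integrable stdGaussPDF := by
  have h : stdGaussPDF =
      fun x ↦ (Real.sqrt (2 * Real.pi))⁻¹ * Real.exp (-(1 / 2) * x ^ 2) := by
    ext x; unfold stdGaussPDF; ring_nf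
  rw [h]
  exact (integrable_exp_neg_mul_sq (by norm_num)).const_mul _

lemma integrable_neg_mul_stdGaussPDF : Integrable fun x ↦ -x * stdGaussPDF x := by
  have h : (fun x ↦ -x * stdGaussPDF x) =
      fun x ↦ -(Real.sqrt (2 * Real.pi))⁻¹ * (x * Real.exp (-(1 / 2) * x ^ 2)) := by
    ext x; unfold stdGaussPDF; ring_nf
  rw [h]
  exact (integrable_mul_exp_neg_mul_sq (by norm_num)).const_mul _

lemma hasDerivAt_stdGaussPDF (x : ℝ) : HasDerivAt stdGaussPDF (-x * stdGaussPDF x) x := by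
  have h : HasDerivAt (fun t : ℝ ↦ -t ^ 2 / 2) (-x) x := by
    exact (((hasDerivAt_pow 2 x).neg).div_const 2).congr_deriv (by push_cast; ring)
  unfold stdGaussPDF
  exact (h.exp.const_mul _).congr_deriv (by ring)

lemma integral_Iic_neg_mul_stdGaussPDF (x : ℝ) :
    ∫ t in Iic x, -t * stdGaussPDF t = stdGaussPDF x := by
  have hbot : Tendsto stdGaussPDF atBot (nhds 0) :=
    tendsto_zero_of_hasDerivAt_of_integrableOn_Iic (a := 0) (fun t _ ↦ hasDerivAt_stdGaussPDF t)
      integrable_neg_mul_stdGaussPDF.integrableOn integrable_stdGaussPDF.integrableOn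
  rw [integral_Iic_of_hasDerivAt_of_tendsto' (fun t _ ↦ hasDerivAt_stdGaussPDF t)
    integrable_neg_mul_stdGaussPDF.integrableOn hbot, sub_zero]

lemma stdGaussCDF_eq_integral (x : ℝ) : stdGaussCDF x = ∫ t in Iic x, stdGaussPDF t := rfl

lemma stdGaussCDF_nonneg (x : ℝ) : 0 ≤ stdGaussCDF x :=
  setIntegral_nonneg measurableSet_Iic fun t _ ↦ (stdGaussPDF_pos t).le

lemma hasDerivAt_stdGaussCDF (x : ℝ) : HasDerivAt stdGaussCDF (stdGaussPDF x) x := by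
  have hsplit : ∀ y, stdGaussCDF y =
      (∫ t in Iic 0, stdGaussPDF t) + ∫ t in (0 : ℝ)..y, stdGaussPDF t := by
    intro y
    rw [← intervalIntegral.integral_Iic_sub_Iic integrable_stdGaussPDF.integrableOn
      integrable_stdGaussPDF.integrableOn, stdGaussCDF_eq_integral]
    ring
  have hFTC : HasDerivAt (fun y ↦ ∫ t in (0 : ℝ)..y, stdGaussPDF t) (stdGaussPDF x) x :=
    intervalIntegral.integral_hasDerivAt_right (continuous_stdGaussPDF.intervalIntegrable _ _)
      (continuous_stdGaussPDF.stronglyMeasurableAtFilter _ _) continuous_stdGaussPDF.continuousAt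
  exact (hFTC.const_add _).congr_of_eventuallyEq (Eventually.of_forall hsplit)

lemma stdGaussCDF_le_of_neg {x : ℝ} (hx : x < 0) : stdGaussCDF x ≤ stdGaussPDF x / -x := by
  have hle : ∀ t ∈ Iic x, stdGaussPDF t ≤ (-x)⁻¹ * (-t * stdGaussPDF t) := by
    intro t ht
    rw [← mul_assoc, ← div_eq_inv_mul]
    have : 1 ≤ -t / -x := (one_le_div (by linarith)).mpr (by linarith [mem_Iic.mp ht])
    nlinarith [stdGaussPDF_pos t]
  calc stdGaussCDF x ≤ ∫ t in Iic x, (-x)⁻¹ * (-t * stdGaussPDF t) :=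
        setIntegral_mono_on integrable_stdGaussPDF.integrableOn
          (integrable_neg_mul_stdGaussPDF.const_mul _).integrableOn measurableSet_Iic hle
    _ = stdGaussPDF x / -x := by
        rw [integral_const_mul, integral_Iic_neg_mul_stdGaussPDF, inv_mul_eq_div]

lemma gelu'_eq (x : ℝ) : gelu' x = stdGaussCDF x + x * stdGaussPDF x := rfl

lemma hasDerivAt_gelu (x : ℝ) : HasDerivAt gelu (gelu' x) x :=
  ((hasDerivAt_id x).mul (hasDerivAt_stdGaussCDF x)).congr_deriv (by simp [gelu'_eq])

lemma hasDerivAt_gelu' (x : ℝ) : HasDerivAt gelu' ((2 - x ^ 2) * stdGaussPDF x) x :=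
  ((hasDerivAt_stdGaussCDF x).add ((hasDerivAt_id x).mul (hasDerivAt_stdGaussPDF x))).congr_deriv
    (by simp only [id_eq]; ring)

lemma gelu'_pos_of_pos {x : ℝ} (hx : 0 < x) : 0 < gelu' x := by
  rw [gelu'_eq]
  nlinarith [stdGaussCDF_nonneg x, stdGaussPDF_pos x]

lemma gelu'_neg_of_lt_neg_one {x : ℝ} (hx : x < -1) : gelu' x < 0 := by
  have hMills := stdGaussCDF_le_of_neg (x := x) (by linarith)
  have hφ := stdGaussPDF_pos x
  have : stdGaussPDF x / -x < -(x * stdGaussPDF x) := by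
    have hx2 : 1 < x ^ 2 := by nlinarith
    rw [div_lt_iff₀ (by linarith)]
    nlinarith [mul_lt_mul_of_pos_right hx2 hφ]
  rw [gelu'_eq]
  linarith

lemma hasDerivAt_add_gelu_mul_add_gelu' (r₁ r₂ x : ℝ) :
    HasDerivAt (fun x ↦ (r₁ + gelu x) * (r₂ + gelu' x))
      (gelu' x * (r₂ + gelu' x) + (r₁ + gelu x) * ((2 - x ^ 2) * stdGaussPDF x)) x :=
  ((hasDerivAt_gelu x).const_add r₁).mul ((hasDerivAt_gelu' x).const_add r₂)

/-- For all reals `r₁ r₂`, the function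
`x ↦ (r₁ + GeLU x) * (r₂ + GeLU' x)` is not constant Lebesgue-almost everywhere. -/
theorem stmt_11 (r₁ r₂ : ℝ) :
    ¬ ∃ C : ℝ, ∀ᵐ x : ℝ ∂(volume : Measure ℝ),
      (r₁ + gelu x) * (r₂ + gelu' x) = C := by
  rintro ⟨C, hC⟩
  have hF := hasDerivAt_add_gelu_mul_add_gelu' r₁ r₂
  have hconst : (fun x ↦ (r₁ + gelu x) * (r₂ + gelu' x)) = fun _ ↦ C :=
    ((continuous_iff_continuousAt.mpr fun x ↦ (hF x).continuousAt).ae_eq_iff_eq volume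
      continuous_const).mp hC
  have hcrit : ∀ x, x ^ 2 = 2 → r₂ + gelu' x = 0 ∨ gelu' x = 0 := by
    intro x hx
    have h := (hF x).unique (hconst ▸ hasDerivAt_const x C)
    simp only [hx, sub_self, zero_mul, mul_zero, add_zero] at h
    exact (mul_eq_zero.mp h).symm
  have hsq : Real.sqrt 2 ^ 2 = 2 := Real.sq_sqrt zero_le_two
  have hone : 1 < Real.sqrt 2 := by rw [Real.lt_sqrt zero_le_one]; norm_num
  have hpos := gelu'_pos_of_pos (x := Real.sqrt 2) (by linarith)
  have hneg := gelu'_neg_of_lt_neg_one (x := -Real.sqrt 2) (by linarith)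
  rcases hcrit _ hsq with h₁ | h₁ <;> rcases hcrit _ (by rw [neg_sq, hsq]) with h₂ | h₂ <;>
    linarith
end
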